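/- Let n ≥ 0 be an integer and s ∈ (2n, 2n+2). Then ∫₀^∞ g_n(t)/t^{s+1} dt = π / (2·Γ(s+1)·sin((s−2n)π/2)). -/

import Mathlib

open MeasureTheory Real Set Filter

/-- `g_n(t) = (-1)^(n+1) (cos t - ∑_{k=0}^n (-1)^k t^{2k}/(2k)!)`. -/
noncomputable def gAux (n : ℕ) (t : ℝ) : ℝ :=
  (-1 : ℝ) ^ (n + 1) *
    (Real.cos t - ∑ k ∈ Finset.range (n + 1),
      (-1 : ℝ) ^ k * t ^ (2 * k) / (Nat.factorial (2 * k)))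

noncomputable def fAux (n : ℕ) (t : ℝ) : ℝ :=
  (-1 : ℝ) ^ n *
    (Real.sin t - ∑ k ∈ Finset.range n,
      (-1 : ℝ) ^ k * t ^ (2 * k + 1) / (Nat.factorial (2 * k + 1)))

lemma hasDerivAt_gAux (n : ℕ) (t : ℝ) : HasDerivAt (gAux n) (fAux n t) t := by
  have hsum : ∀ k : ℕ, HasDerivAt (fun t : ℝ => (-1 : ℝ) ^ k * t ^ (2 * k) / (Nat.factorial (2 * k)))
      ((-1 : ℝ) ^ k * ((2 * k) * t ^ (2 * k - 1)) / (Nat.factorial (2 * k))) t := by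
    intro k
    simpa [mul_div_assoc, mul_comm, mul_left_comm] using
      (((hasDerivAt_pow (2 * k) t).const_mul ((-1 : ℝ) ^ k)).div_const (Nat.factorial (2 * k) : ℝ))
  have h1 : HasDerivAt (gAux n)
      ((-1 : ℝ) ^ (n + 1) * (-Real.sin t - ∑ k ∈ Finset.range (n + 1),
        (-1 : ℝ) ^ k * ((2 * k) * t ^ (2 * k - 1)) / (Nat.factorial (2 * k)))) t := by
    exact (((Real.hasDerivAt_cos t).fun_sub (HasDerivAt.fun_sum (fun k _ => hsum k))).const_mul _)
  convert h1 using 1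
  rw [fAux]
  rw [Finset.sum_range_succ' (fun k => (-1 : ℝ) ^ k * ((2 * k) * t ^ (2 * k - 1)) / (Nat.factorial (2 * k)))]
  have hterm : ∀ k : ℕ, (-1 : ℝ) ^ (k + 1) * ((2 : ℝ) * ((k + 1 : ℕ) : ℝ) * t ^ (2 * (k + 1) - 1)) / (Nat.factorial (2 * (k + 1)))
      = -((-1 : ℝ) ^ k * t ^ (2 * k + 1) / (Nat.factorial (2 * k + 1))) := by
    intro k
    have h2 : 2 * (k + 1) = (2 * k + 1) + 1 := by ring
    rw [h2, Nat.factorial_succ, pow_succ, Nat.add_sub_cancel]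
    have : ((2 * k + 1 + 1 : ℕ) : ℝ) ≠ 0 := by positivity
    have h3 : ((Nat.factorial (2 * k + 1) : ℝ)) ≠ 0 := by positivity
    push_cast
    field_simp
    ring
  rw [Finset.sum_congr rfl (fun k _ => hterm k), Finset.sum_neg_distrib]
  simp only [pow_succ, pow_zero, Nat.cast_zero, mul_zero, zero_mul, Nat.mul_zero,
    Nat.factorial_zero, Nat.cast_one, zero_div, add_zero, one_mul]
  ring

lemma hasDerivAt_fAux (n : ℕ) (t : ℝ) : HasDerivAt (fAux (n + 1)) (gAux n t) t := by
  have hsum : ∀ k : ℕ, HasDerivAt (fun t : ℝ => (-1 : ℝ) ^ k * t ^ (2 * k + 1) / (Nat.factorial (2 * k + 1)))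
      ((-1 : ℝ) ^ k * ((2 * k + 1) * t ^ (2 * k)) / (Nat.factorial (2 * k + 1))) t := by
    intro k
    simpa [mul_div_assoc, mul_comm, mul_left_comm] using
      (((hasDerivAt_pow (2 * k + 1) t).const_mul ((-1 : ℝ) ^ k)).div_const (Nat.factorial (2 * k + 1) : ℝ))
  have h1 : HasDerivAt (fAux (n + 1))
      ((-1 : ℝ) ^ (n + 1) * (Real.cos t - ∑ k ∈ Finset.range (n + 1),
        (-1 : ℝ) ^ k * ((2 * k + 1) * t ^ (2 * k)) / (Nat.factorial (2 * k + 1)))) t := by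
    exact (((Real.hasDerivAt_sin t).fun_sub (HasDerivAt.fun_sum (fun k _ => hsum k))).const_mul _)
  have hk : ∀ k : ℕ, (-1 : ℝ) ^ k * ((2 * (k : ℝ) + 1) * t ^ (2 * k)) / (Nat.factorial (2 * k + 1))
      = (-1 : ℝ) ^ k * t ^ (2 * k) / (Nat.factorial (2 * k)) := by
    intro k
    have h2 : (2 * k + 1) = (2 * k) + 1 := rfl
    rw [h2, Nat.factorial_succ]
    have h3 : ((Nat.factorial (2 * k) : ℝ)) ≠ 0 := by positivity
    push_cast
    field_simp
  have hg : gAux n t = (-1 : ℝ) ^ (n + 1) * (Real.cos t - ∑ k ∈ Finset.range (n + 1),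
      (-1 : ℝ) ^ k * ((2 * (k : ℝ) + 1) * t ^ (2 * k)) / (Nat.factorial (2 * k + 1))) := by
    rw [gAux]
    congr 2
    exact Finset.sum_congr rfl (fun k _ => (hk k).symm)
  rw [hg]
  exact h1

lemma nonneg_of_deriv {u u' : ℝ → ℝ} (hd : ∀ t, HasDerivAt u (u' t) t) (h0 : u 0 = 0)
    (h' : ∀ t, 0 ≤ t → 0 ≤ u' t) : ∀ t, 0 ≤ t → 0 ≤ u t := by
  intro t ht
  have hdiff : Differentiable ℝ u := fun x => (hd x).differentiableAt
  have hmono : MonotoneOn u (Ici 0) := by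
    apply monotoneOn_of_deriv_nonneg (convex_Ici 0) hdiff.continuous.continuousOn
      (fun x _ => (hdiff x).differentiableWithinAt)
    intro x hx
    rw [interior_Ici] at hx
    rw [(hd x).deriv]
    exact h' x (le_of_lt hx)
  have := hmono (self_mem_Ici) ht ht
  rwa [h0] at this

lemma fAux_zero_eq (n : ℕ) : fAux n 0 = 0 := by
  simp [fAux]

lemma gAux_zero_eq (n : ℕ) : gAux n 0 = 0 := by
  rw [gAux, Finset.sum_eq_single 0]
  · simp
  · intro k _ hk
    simp [zero_pow (by omega : 2 * k ≠ 0)]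
  · simp

lemma gAux_nonneg (n : ℕ) : ∀ t, 0 ≤ t → 0 ≤ gAux n t := by
  induction n with
  | zero =>
      intro t _
      have : gAux 0 t = 1 - Real.cos t := by simp [gAux]
      rw [this]
      simp [Real.cos_le_one t]
  | succ n ih =>
      have hf : ∀ t, 0 ≤ t → 0 ≤ fAux (n + 1) t :=
        nonneg_of_deriv (fun t => hasDerivAt_fAux n t) (fAux_zero_eq (n + 1)) ih
      exact nonneg_of_deriv (fun t => hasDerivAt_gAux (n + 1) t) (gAux_zero_eq (n + 1)) hf

lemma integrableOn_rpow_exp {a r : ℝ} (ha : 0 < a) (hr : 0 < r) :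
    IntegrableOn (fun t : ℝ => t ^ (a - 1) * Real.exp (-(r * t))) (Ioi 0) := by
  have h0 := Real.GammaIntegral_convergent ha
  have h1 : IntegrableOn (fun x : ℝ => Real.exp (-(r * x)) * (r * x) ^ (a - 1)) (Ioi 0) := by
    have := (integrableOn_Ioi_comp_mul_left_iff
      (fun x : ℝ => Real.exp (-x) * x ^ (a - 1)) 0 hr).mpr
    rw [mul_zero] at this
    exact this h0
  have h2 : IntegrableOn (fun x : ℝ => (r ^ (a - 1))⁻¹ * (Real.exp (-(r * x)) * (r * x) ^ (a - 1))) (Ioi 0) :=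
    h1.const_mul _
  apply h2.congr_fun ?_ measurableSet_Ioi
  intro x hx
  have hx' : (0 : ℝ) < x := hx
  show (r ^ (a - 1))⁻¹ * (Real.exp (-(r * x)) * (r * x) ^ (a - 1)) = x ^ (a - 1) * Real.exp (-(r * x))
  rw [Real.mul_rpow hr.le hx'.le]
  field_simp [(Real.rpow_pos_of_pos hr (a-1)).ne']

lemma integrableOn_pow_exp (k : ℕ) {x : ℝ} (hx : 0 < x) :
    IntegrableOn (fun t : ℝ => t ^ k * Real.exp (-(x * t))) (Ioi 0) := by
  apply (integrableOn_rpow_exp (by positivity : (0:ℝ) < (k + 1)) hx).congr_fun ?_ measurableSet_Ioi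
  intro t ht
  simp only [show ((k : ℝ) + 1 - 1) = (k : ℝ) by ring, Real.rpow_natCast]

lemma integral_pow_exp (k : ℕ) {x : ℝ} (hx : 0 < x) :
    ∫ t in Ioi (0:ℝ), t ^ k * Real.exp (-(x * t))
      = (Nat.factorial k) * (x⁻¹) ^ (k + 1) := by
  have h := integral_rpow_mul_exp_neg_mul_Ioi (by positivity : (0:ℝ) < (k + 1)) hx
  rw [show ∫ t in Ioi (0:ℝ), t ^ k * Real.exp (-(x * t))
      = ∫ t in Ioi (0:ℝ), t ^ ((k : ℝ) + 1 - 1) * Real.exp (-(x * t)) from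
    setIntegral_congr_fun measurableSet_Ioi (fun t ht => by
      rw [show ((k : ℝ) + 1 - 1) = (k : ℝ) by ring, Real.rpow_natCast]), h]
  rw [show Real.Gamma ((k : ℝ) + 1) = (Nat.factorial k : ℝ) from by
      exact_mod_cast Real.Gamma_nat_eq_factorial k,
    one_div, show ((k : ℝ) + 1) = ((k + 1 : ℕ) : ℝ) by push_cast; ring, Real.rpow_natCast]
  ring

lemma integrableOn_cos_exp {x : ℝ} (hx : 0 < x) :
    IntegrableOn (fun t : ℝ => Real.cos t * Real.exp (-(x * t))) (Ioi 0) := by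
  apply (exp_neg_integrableOn_Ioi 0 hx).mono' ?_ ?_
  · exact (Real.continuous_cos.mul (Real.continuous_exp.comp
      ((continuous_const.mul continuous_id).neg))).aestronglyMeasurable
  · filter_upwards with t
    rw [norm_mul, Real.norm_eq_abs, Real.norm_eq_abs, Real.abs_exp]
    calc |Real.cos t| * Real.exp (-(x * t)) ≤ 1 * Real.exp (-(x * t)) := by
          gcongr; exact Real.abs_cos_le_one t
      _ = Real.exp (-(x * t)) := one_mul _
      _ = Real.exp (-x * t) := by rw [neg_mul]

lemma integral_cos_exp {x : ℝ} (hx : 0 < x) :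
    ∫ t in Ioi (0:ℝ), Real.cos t * Real.exp (-(x * t)) = x / (1 + x ^ 2) := by
  have h1x : (0:ℝ) < 1 + x ^ 2 := by positivity
  have hF : ∀ t : ℝ, HasDerivAt (fun t : ℝ => Real.exp (-(x * t)) * (Real.sin t - x * Real.cos t) / (1 + x ^ 2))
      (Real.cos t * Real.exp (-(x * t))) t := by
    intro t
    have he : HasDerivAt (fun t : ℝ => Real.exp (-(x * t))) (Real.exp (-(x * t)) * (-x)) t := by
      have : HasDerivAt (fun t : ℝ => -(x * t)) (-x) t := by
        have h0 : HasDerivAt (fun t : ℝ => x * t) x t := by simpa using (hasDerivAt_id t).const_mul x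
        exact h0.neg
      exact this.exp
    have hs : HasDerivAt (fun t : ℝ => Real.sin t - x * Real.cos t)
        (Real.cos t - x * (-Real.sin t)) t :=
      (Real.hasDerivAt_sin t).sub ((Real.hasDerivAt_cos t).const_mul x)
    have := (he.fun_mul hs).div_const (1 + x ^ 2)
    refine this.congr_deriv ?_
    rw [div_eq_iff h1x.ne']
    ring
  have htend : Tendsto (fun t : ℝ => Real.exp (-(x * t)) * (Real.sin t - x * Real.cos t) / (1 + x ^ 2))
      atTop (nhds 0) := by
    have hg : Tendsto (fun t : ℝ => Real.exp (-(x * t)) * ((1 + |x|) / (1 + x ^ 2)))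
        atTop (nhds 0) := by
      rw [show (0:ℝ) = 0 * ((1 + |x|) / (1 + x ^ 2)) by ring]
      apply Tendsto.mul_const
      apply Real.tendsto_exp_atBot.comp
      exact (tendsto_neg_atTop_atBot.comp (tendsto_id.const_mul_atTop hx))
    apply squeeze_zero_norm ?_ hg
    · intro t
      rw [Real.norm_eq_abs, abs_div, abs_of_pos h1x, abs_mul, Real.abs_exp, mul_div_assoc]
      gcongr
      calc |Real.sin t - x * Real.cos t| ≤ |Real.sin t| + |x * Real.cos t| := abs_sub _ _
        _ ≤ 1 + |x| * 1 := by
            rw [abs_mul]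
            gcongr
            · exact Real.abs_sin_le_one t
            · exact Real.abs_cos_le_one t
        _ = 1 + |x| := by ring
  have := integral_Ioi_of_hasDerivAt_of_tendsto' (f' := fun t => Real.cos t * Real.exp (-(x * t)))
    (fun t _ => hF t) (integrableOn_cos_exp hx) htend
  rw [this]
  simp
  field_simp

lemma geomId (n : ℕ) {x : ℝ} (hx : 0 < x) :
    x / (1 + x ^ 2) - ∑ k ∈ Finset.range (n + 1), (-1 : ℝ) ^ k * (x⁻¹) ^ (2 * k + 1)
      = (-1 : ℝ) ^ (n + 1) * (x⁻¹) ^ (2 * n + 1) / (1 + x ^ 2) := by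
  have h1x : (0:ℝ) < 1 + x ^ 2 := by positivity
  induction n with
  | zero =>
      rw [Finset.sum_range_one]
      field_simp [hx.ne']
      linear_combination (-x) * (mul_inv_cancel₀ hx.ne')
  | succ n ih =>
      rw [Finset.sum_range_succ, ← sub_sub, ih]
      field_simp [hx.ne']
      linear_combination (x⁻¹ ^ (n * 2) * (-1) ^ n * x⁻¹ * (x * x⁻¹ + 1)) * (mul_inv_cancel₀ hx.ne')

lemma gAux_mul_exp_eq (n : ℕ) (x : ℝ) :
    (fun t : ℝ => gAux n t * Real.exp (-(x * t)))
      = fun t : ℝ => (-1 : ℝ) ^ (n + 1) * (Real.cos t * Real.exp (-(x * t)))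
        - ∑ k ∈ Finset.range (n + 1),
            ((-1 : ℝ) ^ (n + 1) * ((-1 : ℝ) ^ k / (Nat.factorial (2 * k))))
              * (t ^ (2 * k) * Real.exp (-(x * t))) := by
  funext t
  rw [gAux, mul_sub, sub_mul, Finset.mul_sum, Finset.sum_mul]
  congr 1
  · ring
  · exact Finset.sum_congr rfl fun k _ => by ring

lemma integrableOn_gAux_exp (n : ℕ) {x : ℝ} (hx : 0 < x) :
    IntegrableOn (fun t : ℝ => gAux n t * Real.exp (-(x * t))) (Ioi 0) := by
  rw [gAux_mul_exp_eq n x]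
  apply Integrable.sub ((integrableOn_cos_exp hx).const_mul _)
  exact integrable_finset_sum _ fun k _ => (integrableOn_pow_exp (2 * k) hx).const_mul _

lemma integral_gAux_exp (n : ℕ) {x : ℝ} (hx : 0 < x) :
    ∫ t in Ioi (0:ℝ), gAux n t * Real.exp (-(x * t))
      = (x⁻¹) ^ (2 * n + 1) / (1 + x ^ 2) := by
  rw [gAux_mul_exp_eq n x]
  rw [integral_sub ((integrableOn_cos_exp hx).const_mul _)
    (integrable_finset_sum _ fun k _ => (integrableOn_pow_exp (2 * k) hx).const_mul _)]
  rw [integral_finset_sum _ fun k _ => (integrableOn_pow_exp (2 * k) hx).const_mul _]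
  simp_rw [MeasureTheory.integral_const_mul, integral_cos_exp hx, integral_pow_exp _ hx]
  have hfac : ∀ k : ℕ, ((-1 : ℝ) ^ (n + 1) * ((-1 : ℝ) ^ k / (Nat.factorial (2 * k))))
      * ((Nat.factorial (2 * k) : ℝ) * (x⁻¹) ^ (2 * k + 1))
      = (-1 : ℝ) ^ (n + 1) * ((-1 : ℝ) ^ k * (x⁻¹) ^ (2 * k + 1)) := by
    intro k
    have h3 : ((Nat.factorial (2 * k) : ℝ)) ≠ 0 := by positivity
    field_simp
  rw [Finset.sum_congr rfl fun k _ => hfac k, ← Finset.mul_sum, ← mul_sub, geomId n hx]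
  have hsq : (-1 : ℝ) ^ (n + 1) * (-1 : ℝ) ^ (n + 1) = 1 := by
    rw [← pow_add]
    exact Even.neg_one_pow ⟨n + 1, by ring⟩
  rw [mul_div_assoc, ← mul_assoc, hsq, one_mul]

lemma continuousOn_rpow_c (c : ℝ) : ContinuousOn (fun x : ℝ => x ^ c) (Ioi 0) :=
  fun x hx => (Real.continuousAt_rpow_const x c (Or.inl (ne_of_gt hx))).continuousWithinAt

lemma aemeasurable_ofReal_restrict {f : ℝ → ℝ} (hf : ContinuousOn f (Ioi 0)) :
    AEMeasurable (fun x => ENNReal.ofReal (f x)) (volume.restrict (Ioi 0)) :=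
  (hf.aemeasurable measurableSet_Ioi).ennreal_ofReal

lemma aemeasurable_ofReal_prod {F : ℝ × ℝ → ℝ} (hF : ContinuousOn F (Ioi 0 ×ˢ Ioi 0)) :
    AEMeasurable (fun p : ℝ × ℝ => ENNReal.ofReal (F p))
      ((volume.restrict (Ioi (0:ℝ))).prod (volume.restrict (Ioi (0:ℝ)))) := by
  rw [MeasureTheory.Measure.prod_restrict]
  exact (hF.aemeasurable (measurableSet_Ioi.prod measurableSet_Ioi)).ennreal_ofReal

lemma continuousOn_rpow_fst (c : ℝ) :
    ContinuousOn (fun p : ℝ × ℝ => p.1 ^ c) (Ioi 0 ×ˢ Ioi 0) := fun p hp =>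
  ((Real.continuousAt_rpow_const p.1 c (Or.inl (ne_of_gt hp.1))).comp
    continuousAt_fst).continuousWithinAt

lemma ofReal_setIntegral_Ioi (f : ℝ → ℝ) (hf : IntegrableOn f (Ioi 0))
    (h0 : ∀ x ∈ Ioi (0:ℝ), 0 ≤ f x) :
    ENNReal.ofReal (∫ x in Ioi (0:ℝ), f x) = ∫⁻ x in Ioi (0:ℝ), ENNReal.ofReal (f x) :=
  MeasureTheory.ofReal_integral_eq_lintegral_ofReal hf
    ((ae_restrict_iff' measurableSet_Ioi).mpr (Filter.Eventually.of_forall h0))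

lemma integral_exp_c {c : ℝ} (hc : 0 < c) :
    ∫ r in Ioi (0:ℝ), Real.exp (-(c * r)) = c⁻¹ := by
  have h := integral_rpow_mul_exp_neg_mul_Ioi one_pos hc
  rw [show ∫ r in Ioi (0:ℝ), Real.exp (-(c * r))
      = ∫ r in Ioi (0:ℝ), r ^ ((1:ℝ) - 1) * Real.exp (-(c * r)) from
    setIntegral_congr_fun measurableSet_Ioi (fun r _ => by
      rw [sub_self, Real.rpow_zero, one_mul]), h]
  rw [Real.Gamma_one, Real.rpow_one, mul_one, one_div]

lemma integrableOn_exp_c {c : ℝ} (hc : 0 < c) :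
    IntegrableOn (fun r : ℝ => Real.exp (-(c * r))) (Ioi 0) := by
  apply (exp_neg_integrableOn_Ioi 0 hc).congr_fun ?_ measurableSet_Ioi
  intro r _
  show Real.exp (-c * r) = Real.exp (-(c * r))
  rw [neg_mul]

lemma lintegralB {u : ℝ} (hu0 : 0 < u) (hu1 : u < 1) :
    ∫⁻ y in Ioi (0:ℝ), ENNReal.ofReal (y ^ (u - 1) * (1 + y)⁻¹)
      = ENNReal.ofReal (π / Real.sin (π * u)) := by
  have hmeas : AEMeasurable (Function.uncurry fun y r : ℝ =>
      ENNReal.ofReal (y ^ (u - 1) * Real.exp (-((1 + y) * r))))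
      ((volume.restrict (Ioi (0:ℝ))).prod (volume.restrict (Ioi (0:ℝ)))) := by
    apply aemeasurable_ofReal_prod
    exact (continuousOn_rpow_fst (u - 1)).mul
      ((Real.continuous_exp.comp
        (((continuous_const.add continuous_fst).mul continuous_snd).neg)).continuousOn)
  calc ∫⁻ y in Ioi (0:ℝ), ENNReal.ofReal (y ^ (u - 1) * (1 + y)⁻¹)
      = ∫⁻ y in Ioi (0:ℝ), ∫⁻ r in Ioi (0:ℝ),
          ENNReal.ofReal (y ^ (u - 1) * Real.exp (-((1 + y) * r))) := by
        apply setLIntegral_congr_fun measurableSet_Ioi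
        intro y hy
        beta_reduce
        have hy' : (0:ℝ) < y := hy
        have h1y : (0:ℝ) < 1 + y := by linarith
        rw [← ofReal_setIntegral_Ioi _ ((integrableOn_exp_c h1y).const_mul _)
          (fun r _ => by positivity)]
        rw [MeasureTheory.integral_const_mul, integral_exp_c h1y]
    _ = ∫⁻ r in Ioi (0:ℝ), ∫⁻ y in Ioi (0:ℝ),
          ENNReal.ofReal (y ^ (u - 1) * Real.exp (-((1 + y) * r))) :=
        lintegral_lintegral_swap hmeas
    _ = ∫⁻ r in Ioi (0:ℝ), ENNReal.ofReal (Real.Gamma u)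
          * ENNReal.ofReal (r ^ ((1 - u) - 1) * Real.exp (-(1 * r))) := by
        apply setLIntegral_congr_fun measurableSet_Ioi
        intro r hr
        beta_reduce
        have hr' : (0:ℝ) < r := hr
        have heq : ∀ y ∈ Ioi (0:ℝ), y ^ (u - 1) * Real.exp (-((1 + y) * r))
            = Real.exp (-r) * (y ^ (u - 1) * Real.exp (-(r * y))) := by
          intro y _
          rw [show -((1 + y) * r) = -r + -(r * y) by ring, Real.exp_add]
          ring
        rw [setLIntegral_congr_fun measurableSet_Ioi
          (fun y hy => by rw [heq y hy])]
        rw [← ofReal_setIntegral_Ioi _ (((integrableOn_rpow_exp hu0 hr').const_mul _))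
          (fun y hy => by
            have : (0:ℝ) < y := hy
            positivity)]
        rw [MeasureTheory.integral_const_mul, integral_rpow_mul_exp_neg_mul_Ioi hu0 hr']
        rw [← ENNReal.ofReal_mul (Real.Gamma_pos_of_pos hu0).le]
        congr 1
        rw [one_div, Real.inv_rpow hr'.le, show (1 - u) - 1 = -u by ring,
          Real.rpow_neg hr'.le, one_mul]
        ring
    _ = ENNReal.ofReal (π / Real.sin (π * u)) := by
        rw [lintegral_const_mul'' _ (aemeasurable_ofReal_restrict
          (f := fun r => r ^ ((1 - u) - 1) * Real.exp (-(1 * r)))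
          ((continuousOn_rpow_c ((1 - u) - 1)).mul
            ((by fun_prop : Continuous fun r : ℝ => Real.exp (-(1 * r))).continuousOn)))]
        rw [← ofReal_setIntegral_Ioi _ (integrableOn_rpow_exp (by linarith) one_pos)
          (fun r hr => by
            have : (0:ℝ) < r := hr
            positivity)]
        rw [integral_rpow_mul_exp_neg_mul_Ioi (by linarith : (0:ℝ) < 1 - u) one_pos]
        rw [← ENNReal.ofReal_mul (Real.Gamma_pos_of_pos hu0).le]
        rw [show (1:ℝ)/1 = 1 by norm_num, Real.one_rpow, one_mul,
          Real.Gamma_mul_Gamma_one_sub u]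

lemma integrableOn_C {a : ℝ} (h0 : 0 < a) (h2 : a < 2) :
    IntegrableOn (fun x : ℝ => x ^ (a - 1) * (1 + x ^ 2)⁻¹) (Ioi 0) := by
  rw [show Ioi (0:ℝ) = Ioc 0 1 ∪ Ioi 1 from (Ioc_union_Ioi_eq_Ioi zero_le_one).symm]
  apply IntegrableOn.union
  · have hbase : IntegrableOn (fun x : ℝ => x ^ (a - 1)) (Ioc 0 1) := by
      have := intervalIntegral.intervalIntegrable_rpow' (a := 0) (b := 1)
        (by linarith : (-1:ℝ) < a - 1)
      rwa [intervalIntegrable_iff_integrableOn_Ioc_of_le zero_le_one] at this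
    apply hbase.mono' ((((continuousOn_rpow_c (a - 1)).mul
        (((continuous_const.add (continuous_pow 2) : Continuous fun x : ℝ => 1 + x ^ 2).inv₀
          (fun x => (by positivity : (0:ℝ) < 1 + x ^ 2).ne')).continuousOn)).mono
        Ioc_subset_Ioi_self).aestronglyMeasurable measurableSet_Ioc)
    · apply (ae_restrict_iff' measurableSet_Ioc).mpr
      apply Filter.Eventually.of_forall
      intro x hx
      have hx' : (0:ℝ) < x := hx.1
      simp only [Pi.mul_apply, Pi.inv_apply, Pi.add_apply]
      rw [Real.norm_eq_abs, abs_mul, abs_of_nonneg (Real.rpow_nonneg hx'.le _),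
        abs_of_nonneg (by positivity : (0:ℝ) ≤ (1 + x ^ 2)⁻¹)]
      calc x ^ (a - 1) * (1 + x ^ 2)⁻¹ ≤ x ^ (a - 1) * 1 := by
            gcongr
            rw [inv_le_one_iff₀]
            right
            nlinarith
        _ = x ^ (a - 1) := mul_one _
  · have hbase : IntegrableOn (fun x : ℝ => x ^ (a - 3)) (Ioi 1) :=
      integrableOn_Ioi_rpow_of_lt (by linarith) one_pos
    apply hbase.mono' ((((continuousOn_rpow_c (a - 1)).mul
        (((continuous_const.add (continuous_pow 2) : Continuous fun x : ℝ => 1 + x ^ 2).inv₀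
          (fun x => (by positivity : (0:ℝ) < 1 + x ^ 2).ne')).continuousOn)).mono
        (Ioi_subset_Ioi zero_le_one)).aestronglyMeasurable measurableSet_Ioi)
    · apply (ae_restrict_iff' measurableSet_Ioi).mpr
      apply Filter.Eventually.of_forall
      intro x hx
      have hx' : (1:ℝ) < x := hx
      have hx0 : (0:ℝ) < x := by linarith
      simp only [Pi.mul_apply, Pi.inv_apply, Pi.add_apply]
      rw [Real.norm_eq_abs, abs_mul, abs_of_nonneg (Real.rpow_nonneg hx0.le _),
        abs_of_nonneg (by positivity : (0:ℝ) ≤ (1 + x ^ 2)⁻¹)]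
      calc x ^ (a - 1) * (1 + x ^ 2)⁻¹ ≤ x ^ (a - 1) * (x ^ 2)⁻¹ := by
            gcongr
            all_goals first | positivity | nlinarith
        _ = x ^ (a - 3) := by
            rw [← Real.rpow_natCast x 2, ← Real.rpow_neg hx0.le, ← Real.rpow_add hx0]
            congr 1
            push_cast
            ring

lemma integralB {u : ℝ} (hu0 : 0 < u) (hu1 : u < 1) :
    ∫ y in Ioi (0:ℝ), y ^ (u - 1) * (1 + y)⁻¹ = π / Real.sin (π * u) := by
  have hsin : 0 < Real.sin (π * u) := by
    apply Real.sin_pos_of_pos_of_lt_pi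
    · positivity
    · nlinarith [Real.pi_pos]
  have hmeas : AEMeasurable (fun y : ℝ => y ^ (u - 1) * (1 + y)⁻¹)
      (volume.restrict (Ioi (0:ℝ))) := by
    apply ContinuousOn.aemeasurable ?_ measurableSet_Ioi
    exact (continuousOn_rpow_c (u - 1)).mul
      (ContinuousOn.inv₀ (continuous_const.add continuous_id).continuousOn
        (fun x hx => by
          have : (0:ℝ) < x := hx
          positivity))
  rw [MeasureTheory.integral_eq_lintegral_of_nonneg_ae
    ((ae_restrict_iff' measurableSet_Ioi).mpr (Filter.Eventually.of_forall (fun y hy => by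
      have : (0:ℝ) < y := hy
      positivity)))
    hmeas.aestronglyMeasurable]
  rw [lintegralB hu0 hu1, ENNReal.toReal_ofReal (by positivity)]

lemma integralC {a : ℝ} (h0 : 0 < a) (h2 : a < 2) :
    ∫ x in Ioi (0:ℝ), x ^ (a - 1) * (1 + x ^ 2)⁻¹ = π / (2 * Real.sin (π * a / 2)) := by
  have hu0 : 0 < a / 2 := by linarith
  have hu1 : a / 2 < 1 := by linarith
  have hsub := integral_comp_rpow_Ioi_of_pos
    (g := fun y : ℝ => y ^ (a / 2 - 1) * (1 + y)⁻¹) (p := 2) two_pos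
  rw [integralB hu0 hu1] at hsub
  have hcong : ∀ x ∈ Ioi (0:ℝ),
      (2 * x ^ ((2:ℝ) - 1)) • ((x ^ (2:ℝ)) ^ (a / 2 - 1) * (1 + x ^ (2:ℝ))⁻¹)
        = 2 * (x ^ (a - 1) * (1 + x ^ 2)⁻¹) := by
    intro x hx
    have hx' : (0:ℝ) < x := hx
    rw [smul_eq_mul, ← Real.rpow_natCast x 2]
    push_cast
    rw [← Real.rpow_mul hx'.le, show (2:ℝ) * (a / 2 - 1) = a - 2 by ring,
      show (2:ℝ) - 1 = 1 by norm_num, Real.rpow_one]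
    rw [show 2 * x * (x ^ (a - 2) * (1 + x ^ (2:ℝ))⁻¹)
        = 2 * ((x * x ^ (a - 2)) * (1 + x ^ (2:ℝ))⁻¹) by ring]
    have hxx : x * x ^ (a - 2) = x ^ (a - 1) := by
      nth_rewrite 1 [← Real.rpow_one x]
      rw [← Real.rpow_add hx']
      congr 1
      ring
    rw [hxx]
  rw [setIntegral_congr_fun measurableSet_Ioi hcong] at hsub
  rw [MeasureTheory.integral_const_mul] at hsub
  have : (0:ℝ) < Real.sin (π * a / 2) := by
    apply Real.sin_pos_of_pos_of_lt_pi
    · positivity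
    · nlinarith [Real.pi_pos]
  rw [show π * (a / 2) = π * a / 2 by ring] at hsub
  field_simp at hsub ⊢
  linarith

lemma lintegralC {a : ℝ} (h0 : 0 < a) (h2 : a < 2) :
    ∫⁻ x in Ioi (0:ℝ), ENNReal.ofReal (x ^ (a - 1) * (1 + x ^ 2)⁻¹)
      = ENNReal.ofReal (π / (2 * Real.sin (π * a / 2))) := by
  rw [← ofReal_setIntegral_Ioi _ (integrableOn_C h0 h2) (fun x hx => by
    have : (0:ℝ) < x := hx
    positivity), integralC h0 h2]

lemma continuous_gAux (n : ℕ) : Continuous (gAux n) := by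
  show Continuous fun t => (-1 : ℝ) ^ (n + 1) * (Real.cos t - ∑ k ∈ Finset.range (n + 1),
    (-1 : ℝ) ^ k * t ^ (2 * k) / (Nat.factorial (2 * k)))
  apply Continuous.mul continuous_const
  apply Real.continuous_cos.sub
  exact continuous_finset_sum _ fun k _ =>
    ((continuous_const.mul (continuous_pow (2 * k))).div_const _)

theorem stmt16 (n : ℕ) (s : ℝ) (hs1 : (2 * n : ℝ) < s) (hs2 : s < 2 * n + 2) :
    ∫ t in Ioi (0 : ℝ), gAux n t / t ^ (s + 1)
      = π / (2 * Real.Gamma (s + 1) * Real.sin ((s - 2 * n) * π / 2)) := by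
  have hn0 : (0:ℝ) ≤ 2 * n := by positivity
  have hs0 : (0:ℝ) < s := lt_of_le_of_lt hn0 hs1
  have hs1' : (0:ℝ) < s + 1 := by linarith
  have hΓ : 0 < Real.Gamma (s + 1) := Real.Gamma_pos_of_pos hs1'
  have ha0 : 0 < s - 2 * n := by linarith
  have ha2 : s - 2 * n < 2 := by linarith
  have hsin : 0 < Real.sin (π * (s - 2 * n) / 2) := by
    apply Real.sin_pos_of_pos_of_lt_pi
    · positivity
    · nlinarith [Real.pi_pos]
  have key : ∫⁻ t in Ioi (0:ℝ), ENNReal.ofReal (gAux n t / t ^ (s + 1))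
      = ENNReal.ofReal (π / (2 * Real.Gamma (s + 1) * Real.sin ((s - 2 * n) * π / 2))) := by
    have hmeasF : AEMeasurable (Function.uncurry fun t x : ℝ =>
        ENNReal.ofReal (gAux n t / Real.Gamma (s + 1) * (x ^ (s + 1 - 1) * Real.exp (-(t * x)))))
        ((volume.restrict (Ioi (0:ℝ))).prod (volume.restrict (Ioi (0:ℝ)))) := by
      apply aemeasurable_ofReal_prod
      apply Continuous.continuousOn
      apply Continuous.mul (((continuous_gAux n).comp continuous_fst).div_const _)
      apply Continuous.mul
      · exact (Real.continuous_rpow_const (by linarith)).comp continuous_snd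
      · exact Real.continuous_exp.comp ((continuous_fst.mul continuous_snd).neg)
    calc ∫⁻ t in Ioi (0:ℝ), ENNReal.ofReal (gAux n t / t ^ (s + 1))
        = ∫⁻ t in Ioi (0:ℝ), ∫⁻ x in Ioi (0:ℝ), ENNReal.ofReal
            (gAux n t / Real.Gamma (s + 1) * (x ^ (s + 1 - 1) * Real.exp (-(t * x)))) := by
          apply setLIntegral_congr_fun measurableSet_Ioi
          intro t ht
          beta_reduce
          have ht' : (0:ℝ) < t := ht
          have hgt := gAux_nonneg n t ht'.le
          rw [← ofReal_setIntegral_Ioi _ ((integrableOn_rpow_exp hs1' ht').const_mul _)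
            (fun x hx => by
              have : (0:ℝ) < x := hx
              have : (0:ℝ) ≤ x ^ (s + 1 - 1) := Real.rpow_nonneg this.le _
              positivity)]
          rw [MeasureTheory.integral_const_mul, integral_rpow_mul_exp_neg_mul_Ioi hs1' ht']
          congr 1
          rw [one_div, Real.inv_rpow ht'.le]
          field_simp
      _ = ∫⁻ x in Ioi (0:ℝ), ∫⁻ t in Ioi (0:ℝ), ENNReal.ofReal
            (gAux n t / Real.Gamma (s + 1) * (x ^ (s + 1 - 1) * Real.exp (-(t * x)))) :=
          lintegral_lintegral_swap hmeasF
      _ = ∫⁻ x in Ioi (0:ℝ), ENNReal.ofReal ((Real.Gamma (s + 1))⁻¹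
            * (x ^ (s - 2 * n - 1) * (1 + x ^ 2)⁻¹)) := by
          apply setLIntegral_congr_fun measurableSet_Ioi
          intro x hx
          beta_reduce
          have hx' : (0:ℝ) < x := hx
          have heq : ∀ t ∈ Ioi (0:ℝ),
              gAux n t / Real.Gamma (s + 1) * (x ^ (s + 1 - 1) * Real.exp (-(t * x)))
                = x ^ (s + 1 - 1) / Real.Gamma (s + 1) * (gAux n t * Real.exp (-(x * t))) := by
            intro t _
            rw [mul_comm t x]
            ring
          rw [setLIntegral_congr_fun measurableSet_Ioi
            (fun t ht => by rw [heq t ht])]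
          rw [← ofReal_setIntegral_Ioi _ ((integrableOn_gAux_exp n hx').const_mul _)
            (fun t ht => by
              have ht' : (0:ℝ) < t := ht
              have h1 : (0:ℝ) ≤ gAux n t := gAux_nonneg n t ht'.le
              have h2 : (0:ℝ) ≤ x ^ (s + 1 - 1) := Real.rpow_nonneg hx'.le _
              positivity)]
          rw [MeasureTheory.integral_const_mul, integral_gAux_exp n hx']
          congr 1
          have h2 : (x⁻¹ : ℝ) ^ (2 * n + 1) = x ^ (-(2 * (n:ℝ) + 1)) := by
            rw [inv_pow, ← Real.rpow_natCast x (2 * n + 1), ← Real.rpow_neg hx'.le]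
            congr 1
            push_cast
            ring
          have h1 : x ^ (s + 1 - 1) = x ^ s := by
            congr 1
            ring
          have h3 : x ^ (s - 2 * (n:ℝ) - 1) = x ^ s * x ^ (-(2 * (n:ℝ) + 1)) := by
            rw [← Real.rpow_add hx']
            congr 1
            ring
          rw [h1, h2, h3]
          ring
      _ = ENNReal.ofReal ((Real.Gamma (s + 1))⁻¹)
            * ENNReal.ofReal (π / (2 * Real.sin (π * (s - 2 * n) / 2))) := by
          have haem : AEMeasurable (fun x : ℝ =>
              ENNReal.ofReal (x ^ (s - 2 * n - 1) * (1 + x ^ 2)⁻¹))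
              (volume.restrict (Ioi (0:ℝ))) := by
            apply aemeasurable_ofReal_restrict
            exact (continuousOn_rpow_c _).mul
              ((continuous_const.add (continuous_pow 2) : Continuous fun x : ℝ => 1 + x ^ 2).inv₀ (fun x => (by positivity : (0:ℝ) < 1 + x ^ 2).ne')).continuousOn
          rw [show (fun x : ℝ => ENNReal.ofReal ((Real.Gamma (s + 1))⁻¹
              * (x ^ (s - 2 * n - 1) * (1 + x ^ 2)⁻¹)))
              = fun x : ℝ => ENNReal.ofReal ((Real.Gamma (s + 1))⁻¹)
                * ENNReal.ofReal (x ^ (s - 2 * n - 1) * (1 + x ^ 2)⁻¹) from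
            funext fun x => ENNReal.ofReal_mul (by positivity)]
          rw [lintegral_const_mul'' _ haem]
          rw [lintegralC (a := s - 2 * n) ha0 ha2]
      _ = ENNReal.ofReal (π / (2 * Real.Gamma (s + 1) * Real.sin ((s - 2 * n) * π / 2))) := by
          rw [← ENNReal.ofReal_mul (by positivity)]
          congr 1
          rw [show (s - 2 * (n:ℝ)) * π / 2 = π * (s - 2 * n) / 2 by ring]
          rw [mul_comm ((Real.Gamma (s + 1))⁻¹), ← div_eq_mul_inv, div_div]
          congr 1
          ring
  have hnonneg : 0 ≤ᵐ[volume.restrict (Ioi (0:ℝ))] fun t => gAux n t / t ^ (s + 1) := by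
    apply (ae_restrict_iff' measurableSet_Ioi).mpr
    apply Filter.Eventually.of_forall
    intro t ht
    have ht' : (0:ℝ) < t := ht
    have h1 := gAux_nonneg n t ht'.le
    have h2 : (0:ℝ) < t ^ (s + 1) := Real.rpow_pos_of_pos ht' _
    positivity
  have hmeas : AEStronglyMeasurable (fun t : ℝ => gAux n t / t ^ (s + 1))
      (volume.restrict (Ioi (0:ℝ))) := by
    apply ContinuousOn.aestronglyMeasurable ?_ measurableSet_Ioi
    exact ((continuous_gAux n).continuousOn).div (continuousOn_rpow_c (s + 1))
      (fun t ht => (Real.rpow_pos_of_pos ht _).ne')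
  have hsin2 : 0 < Real.sin ((s - 2 * n) * π / 2) := by
    rwa [show (s - 2 * (n:ℝ)) * π / 2 = π * (s - 2 * n) / 2 by ring]
  rw [MeasureTheory.integral_eq_lintegral_of_nonneg_ae hnonneg hmeas, key,
    ENNReal.toReal_ofReal]
  exact (div_pos Real.pi_pos (mul_pos (mul_pos two_pos hΓ) hsin2)).le
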